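/- arXiv:1405.6278 — 3 statements merged into one kernel-verified Lean document; each statement's English description precedes it below -/
import Mathlib

section
/- Let S be a nonempty semigroup such that the set S \ E(S) of non-idempotent elements of S is finite, with cardinality n. Then every S-valued sequence of length n + 1 is not strongly idempotent-product free; that is, every list of n + 1 elements of S contains a nonempty subsequence (order-preserving sublist) whose product, taken in the order of its terms, is an idempotent. -/
/-- Product, in order, of the nonempty list `a :: l` in a semigroup. -/
def sprod {S : Type*} [Mul S] (a : S) (l : List S) : S := l.foldl (· * ·) a

/-- `pow1 x n = x^(n+1)`: the `(n+1)`-st power of `x` in a semigroup. -/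
def pow1 {S : Type*} [Mul S] (x : S) : ℕ → S := fun n => Nat.rec x (fun _ y => y * x) n

/-- `Π(T)`: the set of products, in order, of nonempty lists which are
permutations of order-preserving sublists of `T`. -/
def PiSet {S : Type*} [Mul S] (T : List S) : Set S :=
  {s | ∃ u : List S, u.Sublist T ∧ ∃ a l, (a :: l).Perm u ∧ sprod a l = s}

/-- `A(L)`: the set of products, in order, of nonempty order-preserving sublists of `L`. -/
def ASet {S : Type*} [Mul S] (L : List S) : Set S :=
  {s | ∃ a l, (a :: l).Sublist L ∧ sprod a l = s}

/-- `HasIndexPeriod x r p` says that `r` is the index of `x` (the least `r > 0` such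
that `x^r = x^t` for some positive `t ≠ r`) and `p` is the period of `x` (the least
`p > 0` with `x^(r+p) = x^r`). Powers are expressed via `pow1 x (n-1) = x^n`. -/
def HasIndexPeriod {S : Type*} [Mul S] (x : S) (r p : ℕ) : Prop :=
  (0 < r ∧ (∃ t, 0 < t ∧ t ≠ r ∧ pow1 x (t - 1) = pow1 x (r - 1)) ∧
    ∀ r', 0 < r' → (∃ t, 0 < t ∧ t ≠ r' ∧ pow1 x (t - 1) = pow1 x (r' - 1)) → r ≤ r') ∧
  (0 < p ∧ pow1 x (r + p - 1) = pow1 x (r - 1) ∧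
    ∀ p', 0 < p' → pow1 x (r + p' - 1) = pow1 x (r - 1) → p ≤ p')

/-! Write `A(L)` for the set of products of nonempty subsequences of `L`. If no such product
is idempotent, the sets `A(T₀) ⊆ A(T₁) ⊆ ⋯ ⊆ A(Tₙ₊₁)` of the prefixes `Tₖ` of `T` all lie in
the `n`-element set `S \ E(S)`, so the chain stalls at some step: `A(Tₖ ++ [t]) = A(Tₖ)` with
`t` the next term of `T`. Then `A(Tₖ)` is a finite set containing `t` and closed under right
multiplication by `t`, and such a set always contains an idempotent. -/

section Semigroup

variable {S : Type*} [Semigroup S]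

theorem exists_idempotent_of_finite_of_mul_mem {s : Set S} (hs : s.Finite) (hne : s.Nonempty)
    (hmul : ∀ x ∈ s, ∀ y ∈ s, x * y ∈ s) : ∃ e ∈ s, e * e = e :=
  letI : TopologicalSpace S := ⊥
  haveI : DiscreteTopology S := ⟨rfl⟩
  exists_idempotent_in_compact_subsemigroup (fun _ ↦ continuous_of_discreteTopology) s hne
    hs.isCompact hmul

/-- The elements `x` with `s * x ⊆ s` form a subsemigroup; inside `s` it is finite and contains
`t`, so it has an idempotent. -/
theorem exists_idempotent_of_finite_of_mul_right_mem {s : Set S} (hs : s.Finite) {t : S}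
    (ht : t ∈ s) (hmul : ∀ x ∈ s, x * t ∈ s) : ∃ e ∈ s, e * e = e := by
  obtain ⟨e, ⟨he, -⟩, hee⟩ := exists_idempotent_of_finite_of_mul_mem
    (s := {x | x ∈ s ∧ ∀ y ∈ s, y * x ∈ s}) (hs.subset fun _ h ↦ h.1) ⟨t, ht, hmul⟩
    fun x ⟨_, hx⟩ y ⟨_, hy⟩ ↦ ⟨hy x ‹_›, fun z hz ↦ mul_assoc z x y ▸ hy _ (hx z hz)⟩
  exact ⟨e, he, hee⟩

theorem sprod_append_singleton (a : S) (l : List S) (t : S) :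
    sprod a (l ++ [t]) = sprod a l * t :=
  List.foldl_append

theorem ASet_mono {L₁ L₂ : List S} (h : L₁.Sublist L₂) : ASet L₁ ⊆ ASet L₂ :=
  fun _ ⟨a, l, hsub, hprod⟩ ↦ ⟨a, l, hsub.trans h, hprod⟩

theorem mem_ASet_append_singleton (L : List S) (t : S) : t ∈ ASet (L ++ [t]) :=
  ⟨t, [], List.singleton_sublist.mpr (List.mem_append_right L (List.mem_singleton_self t)), rfl⟩

theorem mul_mem_ASet_append_singleton {L : List S} {s : S} (hs : s ∈ ASet L) (t : S) :
    s * t ∈ ASet (L ++ [t]) := by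
  obtain ⟨a, l, hsub, rfl⟩ := hs
  exact ⟨a, l ++ [t], hsub.append (List.Sublist.refl [t]), sprod_append_singleton a l t⟩

theorem exists_idempotent_mem_ASet_of_append_singleton_subset {L : List S} (hL : (ASet L).Finite)
    {t : S} (h : ASet (L ++ [t]) ⊆ ASet L) : ∃ e ∈ ASet L, e * e = e :=
  exists_idempotent_of_finite_of_mul_right_mem hL (h (mem_ASet_append_singleton L t))
    fun _ hs ↦ h (mul_mem_ASet_append_singleton hs t)

end Semigroup

theorem Set.exists_succ_subset_of_monotone {α : Type*} {A : ℕ → Set α} (hA : Monotone A)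
    {N : Set α} (hN : N.Finite) (hAN : ∀ k, A k ⊆ N) : ∃ k ≤ N.ncard, A (k + 1) ⊆ A k := by
  by_contra! hgrow
  have hcard : ∀ k ≤ N.ncard + 1, k ≤ (A k).ncard := by
    intro k hk
    induction k with
    | zero => exact Nat.zero_le _
    | succ k ih =>
      have hlt := Set.ncard_lt_ncard ⟨hA (Nat.le_add_right k 1), hgrow k (by omega)⟩ (hN.subset (hAN _))
      have := ih (by omega)
      omega
  have := Set.ncard_le_ncard (hAN (N.ncard + 1)) hN
  have := hcard _ le_rfl
  omega

theorem stmt_0_general {S : Type*} [Semigroup S]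
    (hfin : {x : S | x * x ≠ x}.Finite)
    (T : List S) (hlen : T.length = {x : S | x * x ≠ x}.ncard + 1) :
    ∃ a l, (a :: l).Sublist T ∧ sprod a l * sprod a l = sprod a l := by
  by_contra! hfree
  have hprefix : ∀ k, ASet (T.take k) ⊆ {x : S | x * x ≠ x} :=
    fun k _ ⟨a, l, hsub, hprod⟩ ↦ hprod ▸ hfree a l (hsub.trans (T.take_sublist k))
  obtain ⟨k, hk, hstall⟩ := Set.exists_succ_subset_of_monotone
    (fun _ _ h ↦ ASet_mono (List.take_sublist_take_left h)) hfin hprefix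
  have hkT : k < T.length := by omega
  rw [← List.take_concat_get hkT, List.concat_eq_append] at hstall
  obtain ⟨e, he, hee⟩ :=
    exists_idempotent_mem_ASet_of_append_singleton_subset (hfin.subset (hprefix k)) hstall
  exact hprefix k he hee

/-- Every sequence of length `|S \ E(S)| + 1` over a nonempty semigroup `S` with
finitely many non-idempotents is not strongly idempotent-product free. -/
theorem stmt_0 {S : Type*} [Semigroup S] [Nonempty S]
    (hfin : {x : S | x * x ≠ x}.Finite)
    (T : List S) (hlen : T.length = {x : S | x * x ≠ x}.ncard + 1) :
    ∃ a l, (a :: l).Sublist T ∧ sprod a l * sprod a l = sprod a l :=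
  stmt_0_general hfin T hlen
end

section
/- Let S be a nonempty semigroup and let T be an S-valued sequence with Π(T) ∩ E(S) = ∅. Then |Π(T)| ≥ |T|, i.e., the number of distinct products of permuted nonempty subsequences of T is at least the length of T. -/
/-!
If appending `x` to `T` adds no new product, then every power of `x` lies in the finite set
`Π(T)`; the powers of `x` then form a finite semigroup, which contains an idempotent.
So, as long as `Π(T)` is idempotent-free, each new term of `T` strictly enlarges `Π(T)`.
-/

section Semigroup

variable {S : Type*}

lemma sprod_concat [Mul S] (a : S) (l : List S) (x : S) :
    sprod a (l ++ [x]) = sprod a l * x := by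
  simp [sprod]

lemma pow1_succ [Mul S] (x : S) (n : ℕ) : pow1 x (n + 1) = pow1 x n * x := rfl

lemma pow1_add [Semigroup S] (x : S) (m n : ℕ) :
    pow1 x (m + n + 1) = pow1 x m * pow1 x n := by
  induction n with
  | zero => rfl
  | succ n ih => rw [← add_assoc, pow1_succ, ih, pow1_succ, mul_assoc]

lemma Set.Finite.exists_idempotent [Semigroup S] {s : Set S} (hs : s.Finite)
    (hne : s.Nonempty) (hmul : ∀ x ∈ s, ∀ y ∈ s, x * y ∈ s) : ∃ e ∈ s, e * e = e := by
  let _ : TopologicalSpace S := ⊥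
  have : DiscreteTopology S := ⟨rfl⟩
  exact exists_idempotent_in_compact_subsemigroup (fun _ => continuous_of_discreteTopology)
    s hne hs.isCompact hmul

lemma exists_pow1_mul_self_eq [Semigroup S] (x : S) (h : (Set.range (pow1 x)).Finite) :
    ∃ n, pow1 x n * pow1 x n = pow1 x n := by
  obtain ⟨_, ⟨n, rfl⟩, hn⟩ := h.exists_idempotent (Set.range_nonempty _) <| by
    rintro _ ⟨m, rfl⟩ _ ⟨n, rfl⟩
    exact ⟨m + n + 1, pow1_add x m n⟩
  exact ⟨n, hn⟩

end Semigroup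

section PiSet

variable {S : Type*} [Mul S]

lemma piSet_finite (T : List S) : (PiSet T).Finite := by
  refine (List.finite_toSet ((T.sublists.flatMap List.permutations).filterMap
      fun l => match l with | [] => none | a :: l => some (sprod a l))).subset ?_
  rintro s ⟨u, hu, a, l, hp, rfl⟩
  simp only [List.mem_filterMap, List.mem_flatMap, List.mem_sublists, List.mem_permutations]
  exact ⟨a :: l, ⟨u, hu, hp⟩, rfl⟩

lemma piSet_mono {T₁ T₂ : List S} (h : T₁.Sublist T₂) : PiSet T₁ ⊆ PiSet T₂ := by
  rintro s ⟨u, hu, a, l, hp, hs⟩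
  exact ⟨u, hu.trans h, a, l, hp, hs⟩

lemma mem_piSet_concat (T : List S) (x : S) : x ∈ PiSet (T ++ [x]) :=
  ⟨[x], List.sublist_append_right T [x], x, [], List.Perm.refl _, rfl⟩

lemma mul_mem_piSet_concat {T : List S} {x y : S} (hy : y ∈ PiSet T) :
    y * x ∈ PiSet (T ++ [x]) := by
  obtain ⟨u, hu, a, l, hp, rfl⟩ := hy
  exact ⟨u ++ [x], hu.append (List.Sublist.refl [x]), a, l ++ [x], hp.append_right [x],
    sprod_concat a l x⟩

lemma range_pow1_subset_piSet {T : List S} {x : S} (h : PiSet (T ++ [x]) ⊆ PiSet T) :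
    Set.range (pow1 x) ⊆ PiSet T := by
  rintro _ ⟨n, rfl⟩
  induction n with
  | zero => exact h (mem_piSet_concat T x)
  | succ n ih => exact h (mul_mem_piSet_concat ih)

end PiSet

lemma piSet_ssubset_concat {S : Type*} [Semigroup S] {T : List S} {x : S}
    (hfree : ∀ e ∈ PiSet (T ++ [x]), e * e ≠ e) : PiSet T ⊂ PiSet (T ++ [x]) := by
  refine ⟨piSet_mono (List.sublist_append_left T [x]), fun h => ?_⟩
  have hpow := range_pow1_subset_piSet h
  obtain ⟨n, hn⟩ := exists_pow1_mul_self_eq x ((piSet_finite T).subset hpow)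
  exact hfree _ (piSet_mono (List.sublist_append_left T [x]) (hpow ⟨n, rfl⟩)) hn

theorem stmt_4_general {S : Type*} [Semigroup S]
    (T : List S) (hfree : PiSet T ∩ {e : S | e * e = e} = ∅) :
    T.length ≤ (PiSet T).ncard := by
  replace hfree : ∀ e ∈ PiSet T, e * e ≠ e := fun e he hidem =>
    hfree.subset ⟨he, hidem⟩
  induction T using List.reverseRecOn with
  | nil => simp
  | append_singleton T x ih =>
    have hlt := Set.ncard_lt_ncard (piSet_ssubset_concat hfree) (piSet_finite _)
    have hle := ih fun e he => hfree e (piSet_mono (List.sublist_append_left T [x]) he)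
    rw [List.length_append, List.length_singleton]
    omega

/-- If `Π(T)` contains no idempotent, then `|Π(T)| ≥ |T|`. -/
theorem stmt_4 {S : Type*} [Semigroup S] [Nonempty S]
    (T : List S) (hfree : PiSet T ∩ {e : S | e * e = e} = ∅) :
    T.length ≤ (PiSet T).ncard :=
  stmt_4_general T hfree
end

section
/- Let S be a nonempty semigroup such that S \ E(S) is finite, and let T be an S-valued sequence of length |S \ E(S)| with Π(T) ∩ E(S) = ∅. Then for every nonempty subsequence T' of T, |Π(T')| = |T'|; that is, every subsequence of T of length k ≥ 1 yields exactly k distinct products of permuted nonempty subsequences. -/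
/-!
Removing a term `x` from a sequence whose `Π` is finite and free of idempotents makes `Π`
strictly smaller: otherwise `Π` of the shorter sequence contains `x` and is closed under right
multiplication by `x`, and such a finite set contains an idempotent. As `Π` only depends on the
sequence up to permutation, `|Π(W ++ U)| ≥ |Π(U)| + |W|`. For `T' ⊆ T` this yields
`|T'| ≤ |Π(T')|` and `|Π(T')| + (|T| - |T'|) ≤ |Π(T)| ≤ |S \ E(S)| = |T|`.
-/

section

variable {S : Type*}

theorem List.Subperm.piSet_subset [Mul S] {L L' : List S} (h : L.Subperm L') :
    PiSet L ⊆ PiSet L' := by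
  rintro s ⟨u, hu, a, l, hp, rfl⟩
  obtain ⟨u', hu', hsub⟩ := hu.subperm.trans h
  exact ⟨u', hsub, a, l, hp.trans hu'.symm, rfl⟩

theorem List.Perm.piSet_eq [Mul S] {L L' : List S} (h : L.Perm L') : PiSet L = PiSet L' :=
  h.subperm.piSet_subset.antisymm h.symm.subperm.piSet_subset

theorem mem_piSet_of_mem [Mul S] {x : S} {L : List S} (hx : x ∈ L) : x ∈ PiSet L :=
  ⟨[x], List.singleton_sublist.mpr hx, x, [], List.Perm.refl _, rfl⟩

theorem mul_mem_piSet_cons [Mul S] {s : S} {L : List S} (x : S) (hs : s ∈ PiSet L) :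
    s * x ∈ PiSet (x :: L) := by
  obtain ⟨u, hu, a, l, hp, rfl⟩ := hs
  refine ⟨x :: u, hu.cons_cons x, a, l ++ [x], ?_, by simp [sprod]⟩
  exact (hp.append_right [x]).trans (List.perm_append_singleton x u)

theorem exists_isIdempotentElem_of_finite_of_mul_mem [Semigroup S] {A : Set S}
    (hA : A.Finite) {x : S} (hx : x ∈ A) (hmul : ∀ s ∈ A, s * x ∈ A) :
    ∃ e ∈ A, IsIdempotentElem e := by
  -- Ellis–Numakura in the discrete topology, applied to a finite subsemigroup `B ∋ x` of `A`
  let _ : TopologicalSpace S := ⊥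
  have : DiscreteTopology S := ⟨rfl⟩
  let B := A ∩ {s | ∀ t ∈ A, t * s ∈ A}
  have hB : ∀ s ∈ B, ∀ t ∈ B, s * t ∈ B := fun s hs t ht =>
    ⟨ht.2 s hs.1, fun r hr => mul_assoc r s t ▸ ht.2 _ (hs.2 r hr)⟩
  obtain ⟨e, he, hee⟩ := exists_idempotent_in_compact_subsemigroup
    (fun _ => continuous_of_discreteTopology) B ⟨x, hx, hmul⟩
    (hA.subset Set.inter_subset_left).isCompact hB
  exact ⟨e, he.1, hee⟩

theorem piSet_ssubset_cons [Semigroup S] {L : List S} (x : S) (hfin : (PiSet (x :: L)).Finite)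
    (hfree : ∀ e ∈ PiSet (x :: L), ¬IsIdempotentElem e) :
    PiSet L ⊂ PiSet (x :: L) := by
  have hsub : PiSet L ⊆ PiSet (x :: L) := (L.sublist_cons_self x).subperm.piSet_subset
  refine hsub.ssubset_of_ne fun hEq => ?_
  have hx : x ∈ PiSet L := hEq ▸ mem_piSet_of_mem List.mem_cons_self
  have hmul : ∀ s ∈ PiSet L, s * x ∈ PiSet L := fun s hs => hEq ▸ mul_mem_piSet_cons x hs
  obtain ⟨e, he, hee⟩ := exists_isIdempotentElem_of_finite_of_mul_mem (hfin.subset hsub) hx hmul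
  exact hfree e (hsub he) hee

theorem ncard_piSet_add_length_le [Semigroup S] (W U : List S)
    (hfin : (PiSet (W ++ U)).Finite) (hfree : ∀ e ∈ PiSet (W ++ U), ¬IsIdempotentElem e) :
    (PiSet U).ncard + W.length ≤ (PiSet (W ++ U)).ncard := by
  induction W with
  | nil => simp
  | cons x W ih =>
    rw [List.cons_append] at hfin hfree ⊢
    have hss := piSet_ssubset_cons x hfin hfree
    have hle := ih (hfin.subset hss.subset) fun e he => hfree e (hss.subset he)
    have hlt := Set.ncard_lt_ncard hss hfin
    rw [List.length_cons]
    omega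

theorem length_le_ncard_piSet [Semigroup S] (L : List S) (hfin : (PiSet L).Finite)
    (hfree : ∀ e ∈ PiSet L, ¬IsIdempotentElem e) : L.length ≤ (PiSet L).ncard := by
  have h := ncard_piSet_add_length_le L [] (by simpa using hfin) (by simpa using hfree)
  rw [List.append_nil] at h
  omega

end

theorem stmt_6_general {S : Type*} [Semigroup S]
    (hfin : {x : S | x * x ≠ x}.Finite)
    (T : List S) (hlen : T.length = {x : S | x * x ≠ x}.ncard)
    (hfree : PiSet T ∩ {e : S | e * e = e} = ∅) :
    ∀ T' : List S, T'.Sublist T → T' ≠ [] → (PiSet T').ncard = T'.length := by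
  intro T' hsub _
  have hPi : PiSet T ⊆ {x : S | x * x ≠ x} := fun s hs hidem =>
    Set.eq_empty_iff_forall_notMem.mp hfree s ⟨hs, hidem⟩
  have hfinT := hfin.subset hPi
  obtain ⟨W, hW⟩ := hsub.exists_perm_append
  have hT : PiSet T = PiSet (W ++ T') := (hW.trans List.perm_append_comm).piSet_eq
  have hupper := ncard_piSet_add_length_le W T' (hT ▸ hfinT) (hT ▸ hPi)
  have hT' : PiSet T' ⊆ PiSet T := hsub.subperm.piSet_subset
  have hlower := length_le_ncard_piSet T' (hfinT.subset hT') fun e he => hPi (hT' he)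
  have hcard : (PiSet T).ncard ≤ T.length := hlen ▸ Set.ncard_le_ncard hPi hfin
  have hlenT := hW.length_eq
  rw [List.length_append] at hlenT
  rw [← hT] at hupper
  omega

/-- For an idempotent-product free sequence `T` of maximal length `|S \ E(S)|`,
every nonempty order-preserving sublist `T'` of `T` satisfies `|Π(T')| = |T'|`. -/
theorem stmt_6 {S : Type*} [Semigroup S] [Nonempty S]
    (hfin : {x : S | x * x ≠ x}.Finite)
    (T : List S) (hlen : T.length = {x : S | x * x ≠ x}.ncard)
    (hfree : PiSet T ∩ {e : S | e * e = e} = ∅) :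
    ∀ T' : List S, T'.Sublist T → T' ≠ [] → (PiSet T').ncard = T'.length :=
  stmt_6_general hfin T hlen hfree
end
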